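/- If i is a nonnegative even integer and n ≥ 5 is an odd integer, then the integral over [iπ, (i+1)π] of [ (2 sin²(s)/sⁿ - cos(s)sin(s)/s^(n-1) - 1/s^(n-2)) - (2 sin²(s+π)/(s+π)ⁿ - cos(s+π)sin(s+π)/(s+π)^(n-1) - 1/(s+π)^(n-2)) ] · sin^(n-2)(s) ds is negative, provided n ≥ 6 or (n = 5 and i ≥ 2). -/

import Mathlib

/-!
Since `sin²` and `cos · sin` are `π`-periodic, the integrand is
`(bracket n a b s - bracket n a b (s + π)) * sin s ^ (n - 2)` with `a = sin² s`, `b = cos s sin s`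
and `bracket n a b x = (2 a - b x - x²) / xⁿ`, and `sin s > 0` on `(iπ, (i + 1)π)` for even `i`;
so it suffices that `bracket` increases from `s` to `s + π`. For `s ≥ 3` this holds because
`bracket n a b` is increasing on `[3, ∞)` whenever `a ≤ 1` and `|b| ≤ 1/2` (for `n = 5` by
differentiation, then dividing the negative value by the increasing factor `x ^ (n - 5)`). For
`s < 3` we have `n ≥ 7`, and Taylor bounds give `2 a - b s - s² ≤ -s⁶ / 400`, which dominates the
numerator at `s + π` once `n ≥ 7`. Near `s = 0` the integrand is a continuous expression in
`sinc s`, hence integrable.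
-/

open Real Set

theorem le_of_deriv_le_of_nonneg {f g : ℝ → ℝ} (hf : Differentiable ℝ f) (hg : Differentiable ℝ g)
    (h₀ : f 0 ≤ g 0) (hderiv : ∀ x, 0 ≤ x → deriv f x ≤ deriv g x) {x : ℝ} (hx : 0 ≤ x) :
    f x ≤ g x := by
  have hmono : MonotoneOn (g - f) (Ici 0) :=
    monotoneOn_of_deriv_nonneg (convex_Ici 0) (hg.sub hf).continuous.continuousOn
      (hg.sub hf).differentiableOn fun y hy => by
        rw [interior_Ici] at hy
        rw [deriv_sub (hg y) (hf y)]
        exact sub_nonneg.2 (hderiv y hy.le)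
  have := hmono self_mem_Ici hx hx
  simp only [Pi.sub_apply] at this
  linarith

theorem cos_le_taylor_four {x : ℝ} (hx : 0 ≤ x) : cos x ≤ 1 - x ^ 2 / 2 + x ^ 4 / 24 :=
  le_of_deriv_le_of_nonneg (g := fun y => 1 - y ^ 2 / 2 + y ^ 4 / 24) differentiable_cos
    (by fun_prop) (by norm_num) (fun y hy => by
      simp (disch := fun_prop) only [deriv_fun_add, deriv_fun_sub, deriv_const', deriv_div_const,
        deriv_fun_pow, deriv_id'', deriv_cos']
      linarith [sin_ge_sub_cube hy]) hx

theorem sin_le_taylor_five {x : ℝ} (hx : 0 ≤ x) : sin x ≤ x - x ^ 3 / 6 + x ^ 5 / 120 :=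
  le_of_deriv_le_of_nonneg (g := fun y => y - y ^ 3 / 6 + y ^ 5 / 120) differentiable_sin
    (by fun_prop) (by norm_num) (fun y hy => by
      simp (disch := fun_prop) only [deriv_fun_add, deriv_fun_sub, deriv_div_const, deriv_fun_pow,
        deriv_id'', Real.deriv_sin]
      linarith [cos_le_taylor_four hy]) hx

theorem taylor_six_le_cos {x : ℝ} (hx : 0 ≤ x) : 1 - x ^ 2 / 2 + x ^ 4 / 24 - x ^ 6 / 720 ≤ cos x :=
  le_of_deriv_le_of_nonneg (f := fun y => 1 - y ^ 2 / 2 + y ^ 4 / 24 - y ^ 6 / 720)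
    (by fun_prop) differentiable_cos (by norm_num) (fun y hy => by
      simp (disch := fun_prop) only [deriv_fun_add, deriv_fun_sub, deriv_const', deriv_div_const,
        deriv_fun_pow, deriv_id'', deriv_cos']
      linarith [sin_le_taylor_five hy]) hx

theorem taylor_seven_le_sin {x : ℝ} (hx : 0 ≤ x) :
    x - x ^ 3 / 6 + x ^ 5 / 120 - x ^ 7 / 5040 ≤ sin x :=
  le_of_deriv_le_of_nonneg (f := fun y => y - y ^ 3 / 6 + y ^ 5 / 120 - y ^ 7 / 5040)
    (by fun_prop) differentiable_sin (by norm_num) (fun y hy => by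
      simp (disch := fun_prop) only [deriv_fun_add, deriv_fun_sub, deriv_div_const, deriv_fun_pow,
        deriv_id'', Real.deriv_sin]
      linarith [taylor_six_le_cos hy]) hx

theorem abs_cos_mul_sin_le_half (s : ℝ) : |cos s * sin s| ≤ 1 / 2 :=
  abs_le.2 ⟨by nlinarith [sq_nonneg (cos s + sin s), sin_sq_add_cos_sq s],
    by nlinarith [sq_nonneg (cos s - sin s), sin_sq_add_cos_sq s]⟩

-- The left side is `-2 s⁶ / 45 + O(s⁸)`.
theorem numerator_le_of_le_three {s : ℝ} (hs : 0 < s) (hs3 : s ≤ 3) :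
    2 * sin s ^ 2 - cos s * sin s * s - s ^ 2 ≤ -s ^ 6 / 400 := by
  have hdouble : 2 * sin s ^ 2 - cos s * sin s * s - s ^ 2
      = 1 - cos (2 * s) - s / 2 * sin (2 * s) - s ^ 2 := by
    rw [cos_two_mul, sin_two_mul, cos_sq']; ring
  rw [hdouble]
  rcases le_total s 1.8 with hs18 | hs18
  · have hcos := taylor_six_le_cos (by linarith : (0:ℝ) ≤ 2 * s)
    have hsin := mul_le_mul_of_nonneg_left (taylor_seven_le_sin (by linarith : (0:ℝ) ≤ 2 * s))
      (by positivity : (0:ℝ) ≤ s / 2)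
    have h6 : 0 ≤ (1.8 - s) * s ^ 6 := by nlinarith [pow_nonneg hs.le 6]
    have h7 : 0 ≤ (1.8 - s) * s ^ 7 := by nlinarith [pow_nonneg hs.le 7]
    nlinarith [pow_nonneg hs.le 6, pow_nonneg hs.le 8]
  · have h1 := neg_one_le_cos (2 * s)
    have h2 := neg_one_le_sin (2 * s)
    have k : 0 ≤ (s - 1.8) * (3 - s) := mul_nonneg (by linarith) (by linarith)
    nlinarith [mul_nonneg k (pow_nonneg hs.le 4), mul_nonneg k (pow_nonneg hs.le 3),
      mul_nonneg k (pow_nonneg hs.le 2), mul_nonneg k hs.le]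

noncomputable def bracket (n : ℕ) (a b x : ℝ) : ℝ :=
  2 * a / x ^ n - b / x ^ (n - 1) - 1 / x ^ (n - 2)

theorem bracket_eq_div {n : ℕ} (hn : 2 ≤ n) (a b : ℝ) {x : ℝ} (hx : x ≠ 0) :
    bracket n a b x = (2 * a - b * x - x ^ 2) / x ^ n := by
  obtain ⟨m, rfl⟩ := Nat.exists_eq_add_of_le' hn
  simp only [bracket, Nat.add_sub_cancel, show m + 2 - 1 = m + 1 by omega]
  field_simp
  ring

theorem strictMonoOn_numerator_div_pow_five {a b : ℝ} (ha : a ≤ 1)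
    (hb : |b| ≤ 1 / 2) : StrictMonoOn (fun x => (2 * a - b * x - x ^ 2) / x ^ 5) (Ici 3) := by
  have hderiv : ∀ x : ℝ, x ≠ 0 → HasDerivAt (fun x => (2 * a - b * x - x ^ 2) / x ^ 5)
      (x ^ 4 * (3 * x ^ 2 + 4 * b * x - 10 * a) / (x ^ 5) ^ 2) x := by
    intro x hx
    refine ((((hasDerivAt_const x (2 * a)).fun_sub ((hasDerivAt_id' x).const_mul b)).fun_sub
      (hasDerivAt_pow 2 x)).fun_div (hasDerivAt_pow 5 x) (pow_ne_zero 5 hx)).congr_deriv ?_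
    norm_num
    ring
  refine strictMonoOn_of_deriv_pos (convex_Ici 3) (fun x hx => ?_) fun x hx => ?_
  · exact (hderiv x (by linarith [mem_Ici.1 hx])).continuousAt.continuousWithinAt
  · rw [interior_Ici] at hx
    have hx3 : (3 : ℝ) < x := hx
    rw [(hderiv x (by linarith)).deriv]
    have := abs_le.1 hb
    apply div_pos (mul_pos (by positivity) (by nlinarith)) (by positivity)

theorem bracket_lt_bracket_of_three_le {n : ℕ} (hn : 5 ≤ n) {a b : ℝ} (ha : a ≤ 1)
    (hb : |b| ≤ 1 / 2) {s t : ℝ} (hs : 3 ≤ s) (hst : s < t) :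
    bracket n a b s < bracket n a b t := by
  obtain ⟨m, rfl⟩ := Nat.exists_eq_add_of_le' hn
  have hs₀ : 0 < s := by linarith
  have ht₀ : 0 < t := by linarith
  set q : ℝ → ℝ := fun x => (2 * a - b * x - x ^ 2) / x ^ 5
  have hsplit : ∀ x : ℝ, x ≠ 0 → bracket (m + 5) a b x = q x / x ^ m := fun x hx => by
    rw [bracket_eq_div (by omega) a b hx, pow_add, div_mul_eq_div_div_swap]
  have hq : q s < q t :=
    strictMonoOn_numerator_div_pow_five ha hb hs (hs.trans hst.le) hst
  have hqt : q t < 0 := div_neg_of_neg_of_pos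
    (by nlinarith [abs_le.1 hb]) (by positivity)
  rw [hsplit s hs₀.ne', hsplit t ht₀.ne']
  calc q s / s ^ m < q t / s ^ m := div_lt_div_of_pos_right hq (by positivity)
    _ ≤ q t / t ^ m := by
      rw [div_le_div_iff₀ (by positivity) (by positivity)]
      exact mul_le_mul_of_nonpos_left (pow_le_pow_left₀ (by positivity) hst.le m) hqt.le

theorem bracket_lt_bracket_add_pi_of_le_three {n : ℕ} (hn : 7 ≤ n) {s : ℝ} (hs : 0 < s)
    (hs3 : s ≤ 3) :
    bracket n (sin s ^ 2) (cos s * sin s) s < bracket n (sin s ^ 2) (cos s * sin s) (s + π) := by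
  obtain ⟨m, rfl⟩ := Nat.exists_eq_add_of_le' hn
  set t := s + π
  have hst : s < t := by simp [t, pi_pos]
  have ht3 : 3 ≤ t := by linarith [pi_gt_three]
  have ht : 0 < t := by positivity
  rw [bracket_eq_div (by omega) _ _ hs.ne', bracket_eq_div (by omega) _ _ ht.ne',
    div_lt_div_iff₀ (by positivity) (by positivity)]
  have hN := numerator_le_of_le_three hs hs3
  have hM : -(t ^ 2 + t / 2) ≤ 2 * sin s ^ 2 - cos s * sin s * t - t ^ 2 := by
    nlinarith [(abs_le.1 (abs_cos_mul_sin_le_half s)).2, sq_nonneg (sin s)]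
  have h5 : 467 * s < t ^ 5 := by
    have hπ : 3 < π := pi_gt_three
    have hbinom : π ^ 5 + 5 * π ^ 4 * s ≤ t ^ 5 := by
      have : t ^ 5 - (π ^ 5 + 5 * π ^ 4 * s)
          = 10 * π ^ 3 * s ^ 2 + 10 * π ^ 2 * s ^ 3 + 5 * π * s ^ 4 + s ^ 5 := by ring
      nlinarith [show 0 ≤ 10 * π ^ 3 * s ^ 2 + 10 * π ^ 2 * s ^ 3 + 5 * π * s ^ 4 + s ^ 5 by
        positivity]
    nlinarith [pow_le_pow_left₀ (by norm_num) hπ.le 4, pow_le_pow_left₀ (by norm_num) hπ.le 5]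
  have hkey : 400 * (t ^ 2 + t / 2) * s ^ (m + 1) < t ^ (m + 7) := by
    have hquad : 400 * (t ^ 2 + t / 2) ≤ 467 * t ^ 2 := by nlinarith
    calc 400 * (t ^ 2 + t / 2) * s ^ (m + 1) = 400 * (t ^ 2 + t / 2) * s ^ m * s := by ring
      _ ≤ 467 * t ^ 2 * t ^ m * s := by gcongr
      _ = 467 * s * (t ^ 2 * t ^ m) := by ring
      _ < t ^ 5 * (t ^ 2 * t ^ m) := by gcongr
      _ = t ^ (m + 7) := by ring
  calc (2 * sin s ^ 2 - cos s * sin s * s - s ^ 2) * t ^ (m + 7)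
      ≤ -s ^ 6 / 400 * t ^ (m + 7) := by gcongr
    _ < -(t ^ 2 + t / 2) * s ^ (m + 7) := by
      have := mul_lt_mul_of_pos_left hkey (pow_pos hs 6)
      rw [show s ^ (m + 7) = s ^ 6 * s ^ (m + 1) by ring]
      linarith
    _ ≤ (2 * sin s ^ 2 - cos s * sin s * t - t ^ 2) * s ^ (m + 7) := by gcongr

theorem bracket_lt_bracket_add_pi {n : ℕ} (hn : 5 ≤ n) {s : ℝ} (hs : 0 < s)
    (h : 3 ≤ s ∨ 7 ≤ n) :
    bracket n (sin s ^ 2) (cos s * sin s) s < bracket n (sin s ^ 2) (cos s * sin s) (s + π) := by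
  rcases le_or_gt 3 s with hs3 | hs3
  · exact bracket_lt_bracket_of_three_le hn (sin_sq_le_one s) (abs_cos_mul_sin_le_half s) hs3
      (lt_add_of_pos_right s pi_pos)
  · exact bracket_lt_bracket_add_pi_of_le_three (h.resolve_left hs3.not_ge) hs hs3.le

theorem bracket_mul_sin_pow_eq_sinc {n : ℕ} (hn : 2 ≤ n) {x : ℝ} (hx : x ≠ 0) :
    bracket n (sin x ^ 2) (cos x * sin x) x * sin x ^ (n - 2)
      = (2 * sinc x ^ 2 - cos x * sinc x - 1) * sinc x ^ (n - 2) := by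
  obtain ⟨m, rfl⟩ := Nat.exists_eq_add_of_le' hn
  rw [bracket_eq_div hn _ _ hx, sinc_of_ne_zero hx, Nat.add_sub_cancel, div_pow, div_pow]
  field_simp
  ring

noncomputable def integrand (n : ℕ) (s : ℝ) : ℝ :=
  (bracket n (sin s ^ 2) (cos s * sin s) s - bracket n (sin s ^ 2) (cos s * sin s) (s + π)) *
    sin s ^ (n - 2)

theorem intervalIntegrable_integrand {n : ℕ} (hn : 2 ≤ n) {a b : ℝ} (ha : 0 ≤ a) (hab : a ≤ b) :
    IntervalIntegrable (integrand n) MeasureTheory.volume a b := by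
  have hcont : ContinuousOn (fun s => (2 * sinc s ^ 2 - cos s * sinc s - 1) * sinc s ^ (n - 2)
      - bracket n (sin s ^ 2) (cos s * sin s) (s + π) * sin s ^ (n - 2)) (uIcc a b) := by
    have hshift : ∀ s ∈ uIcc a b, s + π ≠ 0 := fun s hs => by
      rw [uIcc_of_le hab] at hs
      linarith [hs.1, pi_pos]
    have := continuous_sinc
    unfold bracket
    fun_prop (disch := intro s hs; exact pow_ne_zero _ (hshift s hs))
  refine (intervalIntegrable_congr_uIoo fun s hs => ?_).2 hcont.intervalIntegrable
  rw [uIoo_of_le hab] at hs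
  rw [integrand, sub_mul, bracket_mul_sin_pow_eq_sinc hn (ha.trans_lt hs.1).ne']

theorem intervalIntegral_neg_of_neg_on {f : ℝ → ℝ} {a b : ℝ}
    (hf : IntervalIntegrable f MeasureTheory.volume a b) (hneg : ∀ x ∈ Ioo a b, f x < 0)
    (hab : a < b) : ∫ x in a..b, f x < 0 := by
  have := intervalIntegral.intervalIntegral_pos_of_pos_on hf.neg
    (fun x hx => neg_pos.2 (hneg x hx)) hab
  rwa [Pi.neg_def, intervalIntegral.integral_neg, neg_pos] at this

theorem sin_pos_of_mem_Ioo_mul_pi {i : ℕ} (hi : Even i) {s : ℝ}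
    (hs : s ∈ Ioo (i * π) ((i + 1) * π)) : 0 < sin s := by
  obtain ⟨k, rfl⟩ := hi
  rw [← sin_sub_nat_mul_two_pi s k]
  push_cast at hs
  exact sin_pos_of_pos_of_lt_pi (by linarith [hs.1]) (by linarith [hs.2])

open Real in
theorem stmt_6_general (n : ℕ) (hodd : Odd n) (i : ℕ) (hi : Even i)
    (h : 6 ≤ n ∨ (n = 5 ∧ 2 ≤ i)) :
    ∫ s in (i * π)..((i + 1) * π),
      ((2 * sin s ^ 2 / s ^ n - cos s * sin s / s ^ (n - 1) - 1 / s ^ (n - 2)) -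
        (2 * sin (s + π) ^ 2 / (s + π) ^ n - cos (s + π) * sin (s + π) / (s + π) ^ (n - 1) -
          1 / (s + π) ^ (n - 2))) * sin s ^ (n - 2) < 0 := by
  have hn : 5 ≤ n := by omega
  have hlt : (i : ℝ) * π < (i + 1) * π := by nlinarith [pi_pos]
  have hneg : ∀ s ∈ Ioo ((i : ℝ) * π) ((i + 1) * π), integrand n s < 0 := fun s hs => by
    have hs₀ : 0 < s := (by positivity : (0 : ℝ) ≤ i * π).trans_lt hs.1
    have hcase : 3 ≤ s ∨ 7 ≤ n := by
      rcases h with h6 | ⟨rfl, hi2⟩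
      · obtain ⟨k, rfl⟩ := hodd
        omega
      · have : (2 : ℝ) ≤ i := by exact_mod_cast hi2
        exact Or.inl (by nlinarith [hs.1, pi_gt_three])
    exact mul_neg_of_neg_of_pos (sub_neg.2 (bracket_lt_bracket_add_pi hn hs₀ hcase))
      (pow_pos (sin_pos_of_mem_Ioo_mul_pi hi hs) _)
  have := intervalIntegral_neg_of_neg_on
    (intervalIntegrable_integrand (by omega) (by positivity) hlt.le) hneg hlt
  simpa only [integrand, bracket, sin_add_pi, cos_add_pi, neg_sq, neg_mul_neg] using this

open Real in
theorem stmt_6 (n : ℕ) (hn : 5 ≤ n) (hodd : Odd n) (i : ℕ) (hi : Even i)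
    (h : 6 ≤ n ∨ (n = 5 ∧ 2 ≤ i)) :
    ∫ s in (i * π)..((i + 1) * π),
      ((2 * sin s ^ 2 / s ^ n - cos s * sin s / s ^ (n - 1) - 1 / s ^ (n - 2)) -
        (2 * sin (s + π) ^ 2 / (s + π) ^ n - cos (s + π) * sin (s + π) / (s + π) ^ (n - 1) -
          1 / (s + π) ^ (n - 2))) * sin s ^ (n - 2) < 0 :=
  stmt_6_general n hodd i hi h
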